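/- arXiv:1102.4727 — 2 statements merged into one kernel-verified Lean document; each statement's English description precedes it below -/
import Mathlib

section
/- In any graph G, no α-critical edge has an endpoint in N[core(G)]. -/
/-- A set of vertices is independent if no two of its vertices are adjacent. -/
def SimpleGraph.IsIndepSet' {V : Type*} (G : SimpleGraph V) (s : Set V) : Prop :=
  s.Pairwise (fun a b => ¬ G.Adj a b)

/-- The independence number: the maximum cardinality of an independent set. -/
noncomputable def indepNum {V : Type*} (G : SimpleGraph V) : ℕ :=
  sSup {n | ∃ s : Set V, G.IsIndepSet' s ∧ s.ncard = n}

/-- The matching number: the maximum cardinality of a matching. -/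
noncomputable def matchNum {V : Type*} (G : SimpleGraph V) : ℕ :=
  sSup {n | ∃ M : SimpleGraph.Subgraph G, M.IsMatching ∧ M.edgeSet.ncard = n}

/-- A maximum independent set. -/
def IsMaxIndepSet {V : Type*} (G : SimpleGraph V) (s : Set V) : Prop :=
  G.IsIndepSet' s ∧ s.ncard = indepNum G

/-- The core: intersection of all maximum independent sets. -/
noncomputable def core {V : Type*} (G : SimpleGraph V) : Set V :=
  ⋂₀ {s | IsMaxIndepSet G s}

/-- Open neighborhood of a set. -/
def nbhdSet {V : Type*} (G : SimpleGraph V) (s : Set V) : Set V :=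
  {v | ∃ w ∈ s, G.Adj v w}

/-- Closed neighborhood of a set. -/
def closedNbhdSet {V : Type*} (G : SimpleGraph V) (s : Set V) : Set V :=
  s ∪ nbhdSet G s

/-- The tree component of `G - xy` containing `x`. -/
noncomputable def treeComp {V : Type*} (G : SimpleGraph V) (x y : V) :
    SimpleGraph ((G.deleteEdges {s(x,y)}).connectedComponentMk x).supp :=
  (G.deleteEdges {s(x,y)}).induce ((G.deleteEdges {s(x,y)}).connectedComponentMk x).supp

/-!
Take a maximum independent set `S` of `G - uv`. Since `|S| > α(G)`, `S` is not independent in `G`,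
so `uv` is the only edge of `G` inside `S`; hence `u, v ∈ S` and both `S - u` and `S - v` are maximum
independent sets of `G`. The core lies in `S - u`, so `u ∉ core G`, and it lies in `S - v`, which
contains `u`, so `u` has no neighbour in the core either.
-/

section

variable {V : Type*} {G : SimpleGraph V}

theorem bddAbove_indepSet_ncard [Finite V] (G : SimpleGraph V) :
    BddAbove {n | ∃ s : Set V, G.IsIndepSet' s ∧ s.ncard = n} :=
  ⟨Nat.card V, by rintro n ⟨s, -, rfl⟩; exact Set.ncard_le_card s⟩

theorem ncard_le_indepNum [Finite V] {s : Set V} (hs : G.IsIndepSet' s) :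
    s.ncard ≤ indepNum G :=
  le_csSup (bddAbove_indepSet_ncard G) ⟨s, hs, rfl⟩

theorem isMaxIndepSet_of_indepNum_le [Finite V] {s : Set V} (hs : G.IsIndepSet' s)
    (h : indepNum G ≤ s.ncard) : IsMaxIndepSet G s :=
  ⟨hs, le_antisymm (ncard_le_indepNum hs) h⟩

theorem exists_isMaxIndepSet [Finite V] (G : SimpleGraph V) : ∃ s, IsMaxIndepSet G s :=
  Nat.sSup_mem (s := {n | ∃ s : Set V, G.IsIndepSet' s ∧ s.ncard = n})
    ⟨0, ∅, Set.pairwise_empty _, Set.ncard_empty V⟩ (bddAbove_indepSet_ncard G)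

theorem notMem_closedNbhdSet_core {s t : Set V} {x : V} (hs : IsMaxIndepSet G s)
    (ht : IsMaxIndepSet G t) (hxs : x ∉ s) (hxt : x ∈ t) : x ∉ closedNbhdSet G (core G) := by
  rintro (hx | ⟨w, hw, hxw⟩)
  · exact hxs (hx s hs)
  · exact ht.1 hxt (hw t ht) hxw.ne hxw

variable {u v : V} {s : Set V}

theorem sym2_eq_of_isIndepSet'_deleteEdges (hs : (G.deleteEdges {s(u, v)}).IsIndepSet' s)
    {a b : V} (ha : a ∈ s) (hb : b ∈ s) (hab : a ≠ b) (hadj : G.Adj a b) : s(a, b) = s(u, v) := by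
  by_contra hne
  exact hs ha hb hab (SimpleGraph.deleteEdges_adj.2 ⟨hadj, hne⟩)

theorem isIndepSet'_diff_singleton_of_deleteEdges (hs : (G.deleteEdges {s(u, v)}).IsIndepSet' s)
    {x : V} (hx : x = u ∨ x = v) : G.IsIndepSet' (s \ {x}) := by
  rintro a ⟨ha, hax⟩ b ⟨hb, hbx⟩ hab hadj
  have hedge := sym2_eq_of_isIndepSet'_deleteEdges hs ha hb hab hadj
  rw [Set.mem_singleton_iff] at hax hbx
  rcases Sym2.eq_iff.1 hedge with ⟨rfl, rfl⟩ | ⟨rfl, rfl⟩ <;> rcases hx with rfl | rfl <;>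
    contradiction

theorem adj_of_isIndepSet'_deleteEdges (hs : (G.deleteEdges {s(u, v)}).IsIndepSet' s)
    (hsG : ¬ G.IsIndepSet' s) : u ∈ s ∧ v ∈ s ∧ G.Adj u v := by
  obtain ⟨a, ha, b, hb, hab, hadj⟩ : ∃ a ∈ s, ∃ b ∈ s, a ≠ b ∧ G.Adj a b := by
    simpa [SimpleGraph.IsIndepSet', Set.Pairwise] using hsG
  have hedge := sym2_eq_of_isIndepSet'_deleteEdges hs ha hb hab hadj
  rcases Sym2.eq_iff.1 hedge with ⟨rfl, rfl⟩ | ⟨rfl, rfl⟩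
  exacts [⟨ha, hb, hadj⟩, ⟨hb, ha, hadj.symm⟩]

theorem notMem_closedNbhdSet_core_of_lt_indepNum_deleteEdges [Finite V]
    (hcrit : indepNum G < indepNum (G.deleteEdges {s(u, v)})) :
    u ∉ closedNbhdSet G (core G) := by
  obtain ⟨S, hS, hScard⟩ := exists_isMaxIndepSet (G.deleteEdges {s(u, v)})
  have hSG : ¬ G.IsIndepSet' S := fun hSG => (ncard_le_indepNum hSG).not_gt (hScard ▸ hcrit)
  obtain ⟨huS, hvS, huv⟩ := adj_of_isIndepSet'_deleteEdges hS hSG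
  have hmax : ∀ x ∈ S, x = u ∨ x = v → IsMaxIndepSet G (S \ {x}) := fun x hxS hx =>
    isMaxIndepSet_of_indepNum_le (isIndepSet'_diff_singleton_of_deleteEdges hS hx) <| by
      have := Set.ncard_sdiff_singleton_add_one hxS S.toFinite
      omega
  exact notMem_closedNbhdSet_core (hmax u huS (.inl rfl)) (hmax v hvS (.inr rfl))
    (fun h => h.2 rfl) ⟨huS, huv.ne⟩

end

theorem stmt13_general {V : Type*} [Fintype V] (G : SimpleGraph V) (u v : V)
    (hcrit : indepNum G < indepNum (G.deleteEdges {s(u,v)})) :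
    u ∉ closedNbhdSet G (core G) ∧ v ∉ closedNbhdSet G (core G) :=
  ⟨notMem_closedNbhdSet_core_of_lt_indepNum_deleteEdges hcrit,
    notMem_closedNbhdSet_core_of_lt_indepNum_deleteEdges (by rwa [Sym2.eq_swap])⟩

theorem stmt13 {V : Type*} [Fintype V] (G : SimpleGraph V) (u v : V)
    (h : G.Adj u v) (hcrit : indepNum G < indepNum (G.deleteEdges {s(u,v)})) :
    u ∉ closedNbhdSet G (core G) ∧ v ∉ closedNbhdSet G (core G) :=
  stmt13_general G u v hcrit
end

section
/- Let G be a connected unicyclic graph on n vertices with α(G) + μ(G) = n − 1, with unique cycle C. Then for every x ∈ N₁(C) and every maximum independent set S of G, the set S ∩ V(T_x) is a maximum independent set of the tree T_x. -/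
open SimpleGraph hiding indepNum
open Set

section

variable {V : Type*} {G : SimpleGraph V}

noncomputable def indepNumOn (G : SimpleGraph V) (s : Set V) : ℕ :=
  sSup {n | ∃ I ⊆ s, G.IsIndepSet' I ∧ I.ncard = n}

theorem SimpleGraph.IsIndepSet'.union {I J : Set V} (hI : G.IsIndepSet' I) (hJ : G.IsIndepSet' J)
    (hIJ : ∀ a ∈ I, ∀ b ∈ J, ¬G.Adj a b) : G.IsIndepSet' (I ∪ J) :=
  pairwise_union.mpr ⟨hI, hJ, fun a ha b hb _ ↦ ⟨hIJ a ha b hb, fun h ↦ hIJ a ha b hb h.symm⟩⟩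

theorem SimpleGraph.Subgraph.IsMatching.sup_of_disjoint_verts {M M' : G.Subgraph}
    (hM : M.IsMatching) (hM' : M'.IsMatching) (hd : Disjoint M.verts M'.verts) :
    (M ⊔ M').IsMatching :=
  hM.sup hM' (by rwa [hM.support_eq_verts, hM'.support_eq_verts])

section Finite

variable [Finite V]

theorem ncard_le_indepNum_s17 {I : Set V} (hI : G.IsIndepSet' I) : I.ncard ≤ indepNum G :=
  le_csSup ⟨Nat.card V, by rintro _ ⟨J, -, rfl⟩; exact ncard_le_card J⟩ ⟨I, hI, rfl⟩

theorem ncard_edgeSet_le_matchNum {M : G.Subgraph} (hM : M.IsMatching) :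
    M.edgeSet.ncard ≤ matchNum G :=
  le_csSup ⟨G.edgeSet.ncard, by rintro _ ⟨N, -, rfl⟩; exact ncard_le_ncard N.edgeSet_subset⟩
    ⟨M, hM, rfl⟩

theorem bddAbove_indepNumOn (s : Set V) :
    BddAbove {n | ∃ I ⊆ s, G.IsIndepSet' I ∧ I.ncard = n} :=
  ⟨Nat.card V, by rintro _ ⟨I, -, -, rfl⟩; exact ncard_le_card I⟩

theorem ncard_le_indepNumOn {I s : Set V} (hIs : I ⊆ s) (hI : G.IsIndepSet' I) :
    I.ncard ≤ indepNumOn G s :=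
  le_csSup (bddAbove_indepNumOn s) ⟨I, hIs, hI, rfl⟩

theorem exists_ncard_eq_indepNumOn (s : Set V) :
    ∃ I ⊆ s, G.IsIndepSet' I ∧ I.ncard = indepNumOn G s :=
  Nat.sSup_mem (s := {n | ∃ I ⊆ s, G.IsIndepSet' I ∧ I.ncard = n})
    ⟨0, ∅, empty_subset s, pairwise_empty _, ncard_empty V⟩ (bddAbove_indepNumOn s)

theorem indepNumOn_add_one_le {s t : Set V} {u : V} (hu : u ∈ s) (hts : t ⊆ s) (hut : u ∉ t)
    (hadj : ∀ b ∈ t, ¬G.Adj u b) : indepNumOn G t + 1 ≤ indepNumOn G s := by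
  obtain ⟨I, hIt, hI, hIcard⟩ := exists_ncard_eq_indepNumOn (G := G) t
  have hindep : G.IsIndepSet' ({u} ∪ I) :=
    IsIndepSet'.union (pairwise_singleton u _) hI (by simpa using fun b hb ↦ hadj b (hIt hb))
  have := ncard_le_indepNumOn (union_subset (singleton_subset_iff.2 hu) (hIt.trans hts)) hindep
  rwa [singleton_union, ncard_insert_of_notMem (fun h ↦ hut (hIt h)), hIcard] at this

theorem indepNum_induce (s : Set V) : indepNum (G.induce s) = indepNumOn G s := by
  apply le_antisymm
  · refine csSup_le ⟨0, ∅, pairwise_empty _, ncard_empty _⟩ ?_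
    rintro _ ⟨t, ht, rfl⟩
    rw [← ncard_image_of_injective t Subtype.val_injective]
    refine ncard_le_indepNumOn image_val_subset ?_
    rintro _ ⟨a, ha, rfl⟩ _ ⟨b, hb, rfl⟩ hne hab
    exact ht ha hb (ne_of_apply_ne _ hne) hab
  · refine csSup_le ⟨0, ∅, empty_subset s, pairwise_empty _, ncard_empty V⟩ ?_
    rintro _ ⟨I, hIs, hI, rfl⟩
    have hcard : (Subtype.val ⁻¹' I : Set s).ncard = I.ncard :=
      ncard_preimage_of_injective_subset_range Subtype.val_injective (by rwa [Subtype.range_coe])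
    exact hcard ▸ ncard_le_indepNum_s17 fun a ha b hb hne ↦ hI ha hb (Subtype.val_injective.ne hne)

theorem isMaxIndepSet_induce_preimage {S s : Set V} (hS : G.IsIndepSet' S)
    (hcard : (S ∩ s).ncard = indepNumOn G s) :
    IsMaxIndepSet (G.induce s) (Subtype.val ⁻¹' S) := by
  refine ⟨fun a ha b hb hne ↦ hS ha hb (Subtype.val_injective.ne hne), ?_⟩
  rw [indepNum_induce, ← hcard, ← ncard_image_of_injective _ Subtype.val_injective,
    Subtype.image_preimage_coe, inter_comm]

theorem SimpleGraph.Subgraph.ncard_edgeSet_sup {M M' : G.Subgraph}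
    (hd : Disjoint M.verts M'.verts) :
    (M ⊔ M').edgeSet.ncard = M.edgeSet.ncard + M'.edgeSet.ncard := by
  rw [Subgraph.edgeSet_sup]
  refine ncard_union_eq (Set.disjoint_left.2 fun e he he' ↦ ?_)
  induction e using Sym2.ind with
  | _ a b => exact Set.disjoint_left.1 hd (M.edge_vert he) (M'.edge_vert he')

theorem SimpleGraph.IsAcyclic.exists_existsUnique_adj (hG : G.IsAcyclic) {a b : V}
    (hab : G.Adj a b) : ∃ u, ∃! w, G.Adj u w := by
  have : Nonempty V := ⟨a⟩
  obtain ⟨u, v, p, hp, hmax⟩ := Walk.exists_isPath_forall_isPath_length_le_length G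
  have hnil : ¬p.Nil := fun h ↦ by
    have := hmax a b (.cons hab .nil) (Walk.IsPath.nil.cons (by simpa using hab.ne))
    simp [Walk.length_eq_zero_iff.mpr h] at this
  refine ⟨u, p.snd, p.adj_snd hnil, fun w huw ↦ hG.eq_snd_of_adj_start hp huw ?_⟩
  by_contra hw
  have := hmax w v (.cons huw.symm p) (hp.cons hw)
  simp at this

theorem exists_isMatching_ncard_le_indepNumOn_add {s : Set V} (hs : (G.induce s).IsAcyclic) :
    ∃ M : G.Subgraph, M.IsMatching ∧ M.verts ⊆ s ∧
      s.ncard ≤ indepNumOn G s + M.edgeSet.ncard := by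
  induction hn : s.ncard using Nat.strong_induction_on generalizing s with
  | _ n ih =>
  by_cases hedge : ∃ a b : s, G.Adj a b
  swap
  · push Not at hedge
    refine ⟨⊥, by simp [Subgraph.IsMatching], empty_subset s, ?_⟩
    have := ncard_le_indepNumOn subset_rfl fun a ha b hb _ ↦ hedge ⟨a, ha⟩ ⟨b, hb⟩
    omega
  obtain ⟨a, b, hab⟩ := hedge
  obtain ⟨⟨u, hu⟩, ⟨w, hw⟩, huw, hleaf⟩ := hs.exists_existsUnique_adj (a := a) (b := b) hab
  replace huw : G.Adj u w := huw
  set t := s \ {u, w}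
  have hts : t ⊆ s := sdiff_subset
  have hcard : t.ncard + 2 = s.ncard := by
    rw [← ncard_pair huw.ne, ncard_sdiff_add_ncard_of_subset (pair_subset hu hw)]
  obtain ⟨M, hM, hMt, hbound⟩ :=
    ih t.ncard (by omega) (hs.embedding (G.induceHomOfLE hts)) rfl
  have hd : Disjoint M.verts (G.subgraphOfAdj huw).verts := by
    rw [subgraphOfAdj_verts]
    exact disjoint_sdiff_left.mono_left hMt
  have hα : indepNumOn G t + 1 ≤ indepNumOn G s := by
    refine indepNumOn_add_one_le hu hts (fun h ↦ h.2 (mem_insert u _)) fun c hc huc ↦ ?_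
    have hcw : c = w := congrArg Subtype.val (hleaf ⟨c, hts hc⟩ huc)
    exact hc.2 (hcw ▸ mem_insert_of_mem u rfl)
  refine ⟨M ⊔ G.subgraphOfAdj huw,
    hM.sup_of_disjoint_verts (.subgraphOfAdj huw) hd,
    union_subset (hMt.trans hts) (by simp [pair_subset hu hw]), ?_⟩
  rw [Subgraph.ncard_edgeSet_sup hd, edgeSet_subgraphOfAdj, ncard_singleton]
  omega

theorem ncard_edgeSet_add_ncard_edgeSet_lt_matchNum {M₁ M₂ : G.Subgraph} (hM₁ : M₁.IsMatching)
    (hM₂ : M₂.IsMatching) {x y : V} (hxy : G.Adj x y) (h₁ : Disjoint M₁.verts {x, y})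
    (h₂ : Disjoint M₂.verts {x, y}) (h : Disjoint M₁.verts M₂.verts) :
    M₁.edgeSet.ncard + M₂.edgeSet.ncard < matchNum G := by
  have hd₁ : Disjoint M₁.verts (G.subgraphOfAdj hxy).verts := by rwa [subgraphOfAdj_verts]
  have hd₂ : Disjoint (M₁ ⊔ G.subgraphOfAdj hxy).verts M₂.verts := by
    rw [Subgraph.verts_sup, subgraphOfAdj_verts]
    exact disjoint_union_left.2 ⟨h, h₂.symm⟩
  have hM := (hM₁.sup_of_disjoint_verts (.subgraphOfAdj hxy) hd₁).sup_of_disjoint_verts hM₂ hd₂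
  calc M₁.edgeSet.ncard + M₂.edgeSet.ncard
      < (M₁ ⊔ G.subgraphOfAdj hxy ⊔ M₂).edgeSet.ncard := by
        rw [Subgraph.ncard_edgeSet_sup hd₂, Subgraph.ncard_edgeSet_sup hd₁,
          edgeSet_subgraphOfAdj, ncard_singleton]
        omega
    _ ≤ matchNum G := ncard_edgeSet_le_matchNum hM

theorem indepNumOn_sdiff_singleton_add_indepNumOn_compl_le {P : Set V} {p : V}
    (hp : ∀ a ∈ P, ∀ b ∉ P, G.Adj a b → a = p) :
    indepNumOn G (P \ {p}) + indepNumOn G Pᶜ ≤ indepNum G := by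
  obtain ⟨I, hIP, hI, hIcard⟩ := exists_ncard_eq_indepNumOn (G := G) (P \ {p})
  obtain ⟨J, hJP, hJ, hJcard⟩ := exists_ncard_eq_indepNumOn (G := G) Pᶜ
  have hIJ : Disjoint I J :=
    disjoint_of_subset (hIP.trans sdiff_subset) hJP disjoint_compl_right
  rw [← hIcard, ← hJcard, ← ncard_union_eq hIJ]
  exact ncard_le_indepNum_s17 <| hI.union hJ fun a ha b hb hab ↦
    (hIP ha).2 (hp a (hIP ha).1 b (hJP hb) hab)

theorem ncard_inter_eq_indepNumOn_of_cut_edge {K : Set V} {x y : V}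
    (hxK : x ∈ K) (hyK : y ∉ K) (hxy : G.Adj x y)
    (hcut : ∀ a ∈ K, ∀ b ∉ K, G.Adj a b → a = x ∧ b = y)
    (hK : (G.induce (K \ {x})).IsAcyclic) (hKc : (G.induce (Kᶜ \ {y})).IsAcyclic)
    (hsum : indepNum G + matchNum G < Nat.card V) {S : Set V} (hS : IsMaxIndepSet G S) :
    (S ∩ K).ncard = indepNumOn G K := by
  obtain ⟨hSind, hScard⟩ := hS
  have hSK : (S ∩ K).ncard ≤ indepNumOn G K :=
    ncard_le_indepNumOn inter_subset_right (hSind.mono inter_subset_left)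
  have hSKc : (S \ K).ncard ≤ indepNumOn G Kᶜ :=
    ncard_le_indepNumOn (fun a ha ↦ ha.2) (hSind.mono sdiff_subset)
  have hsplit := ncard_inter_add_ncard_sdiff_eq_ncard S K
  have hαy : indepNumOn G (Kᶜ \ {y}) + indepNumOn G K ≤ indepNum G := by
    simpa using indepNumOn_sdiff_singleton_add_indepNumOn_compl_le (P := Kᶜ)
      fun a ha b hb hab ↦ (hcut b (not_not.mp hb) a ha hab.symm).2
  have hαx : indepNumOn G (K \ {x}) + indepNumOn G Kᶜ ≤ indepNum G :=
    indepNumOn_sdiff_singleton_add_indepNumOn_compl_le fun a ha b hb hab ↦ (hcut a ha b hb hab).1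
  refine hSK.antisymm (not_lt.mp fun hlt ↦ hsum.not_ge ?_)
  obtain ⟨M₁, hM₁, hM₁K, hbound₁⟩ := exists_isMatching_ncard_le_indepNumOn_add hK
  obtain ⟨M₂, hM₂, hM₂K, hbound₂⟩ := exists_isMatching_ncard_le_indepNumOn_add hKc
  have hμ := ncard_edgeSet_add_ncard_edgeSet_lt_matchNum hM₁ hM₂ hxy
    (Set.disjoint_left.2 fun a ha hxy' ↦ by
      rcases hxy' with rfl | rfl
      exacts [(hM₁K ha).2 rfl, hyK (hM₁K ha).1])
    (Set.disjoint_left.2 fun a ha hxy' ↦ by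
      rcases hxy' with rfl | rfl
      exacts [(hM₂K ha).1 hxK, (hM₂K ha).2 rfl])
    (Set.disjoint_left.2 fun a ha₁ ha₂ ↦ (hM₂K ha₂).1 (hM₁K ha₁).1)
  have hn : (K \ {x}).ncard + 1 + ((Kᶜ \ {y}).ncard + 1) = Nat.card V := by
    rw [ncard_sdiff_singleton_add_one hxK, ncard_sdiff_singleton_add_one hyK,
      ncard_add_ncard_compl]
  omega

end Finite

theorem SimpleGraph.Connected.connected_deleteEdges_of_mem_edges (hG : G.Connected) {u : V}
    {c : G.Walk u u} (hc : c.IsCycle) {e : Sym2 V} (he : e ∈ c.edges) :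
    (G.deleteEdges {e}).Connected := by
  induction e using Sym2.ind with
  | _ a b =>
    exact hG.connected_delete_edge_of_not_isBridge fun hb ↦ hb.notMem_edges_of_isCycle hc he

theorem ncard_edgeSet_deleteEdges_add_one [Finite V] {e : Sym2 V} (he : e ∈ G.edgeSet) :
    (G.deleteEdges {e}).edgeSet.ncard + 1 = G.edgeSet.ncard := by
  rw [edgeSet_deleteEdges, ncard_sdiff_singleton_add_one he]

theorem SimpleGraph.Connected.card_le_ncard_edgeSet_of_isCycle [Finite V] (hG : G.Connected)
    {u : V} {c : G.Walk u u} (hc : c.IsCycle) : Nat.card V ≤ G.edgeSet.ncard := by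
  obtain ⟨e, he, -⟩ := (Walk.mem_support_iff_exists_mem_edges_of_not_nil hc.not_nil).mp
    c.start_mem_support
  have := (hG.connected_deleteEdges_of_mem_edges hc he).card_vert_le_card_edgeSet_add_one
  rw [Nat.card_coe_set_eq] at this
  have := ncard_edgeSet_deleteEdges_add_one (c.edges_subset_edgeSet he)
  omega

theorem edges_subset_edges_of_isCycle [Finite V] (hG : G.Connected)
    (hE : G.edgeSet.ncard = Nat.card V) {u₁ u₂ : V} {c₁ : G.Walk u₁ u₁} {c₂ : G.Walk u₂ u₂}
    (hc₁ : c₁.IsCycle) (hc₂ : c₂.IsCycle) : c₁.edges ⊆ c₂.edges := by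
  intro e he
  by_contra he₂
  have hc₂' :=
    Walk.IsCycle.toDeleteEdges (s := {e}) (h := hc₂) (hp := by rintro _ hf rfl; exact he₂ hf)
  have := (hG.connected_deleteEdges_of_mem_edges hc₁ he).card_le_ncard_edgeSet_of_isCycle hc₂'
  have := ncard_edgeSet_deleteEdges_add_one (c₁.edges_subset_edgeSet he)
  omega

theorem mem_support_of_isCycle [Finite V] (hG : G.Connected) (hE : G.edgeSet.ncard = Nat.card V)
    {u₁ u₂ y : V} {c₁ : G.Walk u₁ u₁} {c₂ : G.Walk u₂ u₂} (hc₁ : c₁.IsCycle) (hc₂ : c₂.IsCycle)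
    (hy : y ∈ c₁.support) : y ∈ c₂.support := by
  obtain ⟨e, he, hye⟩ := (Walk.mem_support_iff_exists_mem_edges_of_not_nil hc₁.not_nil).mp hy
  exact Walk.mem_support_iff_exists_mem_edges.mpr
    (.inr ⟨e, edges_subset_edges_of_isCycle hG hE hc₁ hc₂ he, hye⟩)

theorem isAcyclic_induce_of_forall_isCycle_mem_support {y : V}
    (h : ∀ u (c : G.Walk u u), c.IsCycle → y ∈ c.support) {s : Set V} (hy : y ∉ s) :
    (G.induce s).IsAcyclic := fun _ c hc ↦ by
  have := h _ (c.map (Embedding.induce (G := G) s).toHom) (hc.map Subtype.val_injective)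
  obtain ⟨z, -, rfl⟩ := List.mem_map.mp (Walk.support_map _ _ ▸ this)
  exact hy z.2

theorem SimpleGraph.ConnectedComponent.eq_of_adj_of_mem_supp_of_notMem_supp {e : Sym2 V}
    (C : (G.deleteEdges {e}).ConnectedComponent) {a b : V} (ha : a ∈ C.supp) (hb : b ∉ C.supp)
    (hab : G.Adj a b) : s(a, b) = e :=
  by_contra fun h ↦ hb (C.mem_supp_of_adj_mem_supp ha (by simp [hab, h]))

theorem treeComp_eq_induce {x y : V}
    (hy : y ∉ ((G.deleteEdges {s(x, y)}).connectedComponentMk x).supp) :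
    treeComp G x y = G.induce ((G.deleteEdges {s(x, y)}).connectedComponentMk x).supp := by
  ext a b
  simp only [treeComp, comap_adj, Function.Embedding.subtype_apply, deleteEdges_adj,
    mem_singleton_iff, and_iff_left_iff_imp]
  intro _ hab
  rcases Sym2.eq_iff.mp hab with ⟨-, h⟩ | ⟨h, -⟩
  exacts [hy (mem_of_eq_of_mem h.symm b.2), hy (mem_of_eq_of_mem h.symm a.2)]

end

theorem stmt17 {V : Type*} [Fintype V] (G : SimpleGraph V)
    (hconn : G.Connected) (huni : G.edgeSet.ncard = Fintype.card V)
    {v : V} (c : G.Walk v v) (hc : c.IsCycle)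
    (hsum : indepNum G + matchNum G = Fintype.card V - 1)
    (x y : V) (hx : x ∉ c.support) (hy : y ∈ c.support) (hadj : G.Adj x y) :
    ∀ S : Set V, IsMaxIndepSet G S →
      IsMaxIndepSet (treeComp G x y) (Subtype.val ⁻¹' S) := by
  intro S hS
  have : Nonempty V := hconn.nonempty
  rw [← Nat.card_eq_fintype_card] at huni hsum
  set C := (G.deleteEdges {s(x, y)}).connectedComponentMk x
  have hcycle (u) (p : G.Walk u u) (hp : p.IsCycle) : y ∈ p.support :=
    mem_support_of_isCycle hconn huni hc hp hy
  have hyC : y ∉ C.supp := fun h ↦ by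
    obtain ⟨u, p, hp, hxy⟩ := adj_and_reachable_delete_edges_iff_exists_cycle.mp
      ⟨hadj, (ConnectedComponent.exact h).symm⟩
    exact hx <| c.fst_mem_support_of_mem_edges <|
      edges_subset_edges_of_isCycle hconn huni hp hc hxy
  have hcut (a) (ha : a ∈ C.supp) (b) (hb : b ∉ C.supp) (hab : G.Adj a b) : a = x ∧ b = y := by
    rcases Sym2.eq_iff.mp (C.eq_of_adj_of_mem_supp_of_notMem_supp ha hb hab) with h | ⟨rfl, -⟩
    exacts [h, absurd ha hyC]
  rw [treeComp_eq_induce hyC]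
  refine isMaxIndepSet_induce_preimage hS.1 <|
    ncard_inter_eq_indepNumOn_of_cut_edge (K := C.supp) rfl hyC hadj hcut
      (isAcyclic_induce_of_forall_isCycle_mem_support hcycle fun h ↦ hyC h.1)
      (isAcyclic_induce_of_forall_isCycle_mem_support hcycle fun h ↦ h.2 rfl) ?_ hS
  have := Nat.card_pos (α := V)
  omega
end
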